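/- For the kernel k(u) = (¼(√105 − 3) + ½(5 − √105)|u|) · 1_{|u| ≤ 1}, with K(t) = ∫_{-∞}^t k(u) du, the integral A_{1,1} = ∫_{-∞}^{∞} K(u) k(u) u du equals 0. -/
import Mathlib

open MeasureTheory Real

private lemma poly_int (c0 c1 c2 c3 c4 lo hi : ℝ) :
    ∫ x in lo..hi, (c0 + c1*x + c2*x^2 + c3*x^3 + c4*x^4)
      = c0*(hi-lo) + c1*(hi^2-lo^2)/2 + c2*(hi^3-lo^3)/3 + c3*(hi^4-lo^4)/4
        + c4*(hi^5-lo^5)/5 := by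
  have h : ∀ x ∈ Set.uIcc lo hi,
      HasDerivAt (fun y : ℝ => c0*y + c1*y^2/2 + c2*y^3/3 + c3*y^4/4 + c4*y^5/5)
        (c0 + c1*x + c2*x^2 + c3*x^3 + c4*x^4) x := by
    intro x _
    have h1 : HasDerivAt (fun y : ℝ => c0*y + c1*y^2/2 + c2*y^3/3 + c3*y^4/4 + c4*y^5/5)
        (c0 * 1 + c1*((2:ℕ)*x^(2-1))/2 + c2*((3:ℕ)*x^(3-1))/3 + c3*((4:ℕ)*x^(4-1))/4
          + c4*((5:ℕ)*x^(5-1))/5) x := by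
      exact (((((hasDerivAt_id x).const_mul c0).add
        (((hasDerivAt_pow 2 x).const_mul c1).div_const 2)).add
        (((hasDerivAt_pow 3 x).const_mul c2).div_const 3)).add
        (((hasDerivAt_pow 4 x).const_mul c3).div_const 4)).add
        (((hasDerivAt_pow 5 x).const_mul c4).div_const 5)
    convert h1 using 1
    push_cast
    ring
  rw [intervalIntegral.integral_eq_sub_of_hasDerivAt h
    (Continuous.intervalIntegrable (by fun_prop) _ _)]
  ring

theorem kernel_A11_eq_zero
    (k : ℝ → ℝ)
    (hk : ∀ u, k u = if |u| ≤ 1 then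
      (1 / 4) * (Real.sqrt 105 - 3) + (1 / 2) * (5 - Real.sqrt 105) * |u|
      else 0)
    (K : ℝ → ℝ)
    (hK : ∀ t, K t = ∫ u in Set.Iic t, k u) :
    ∫ u, K u * k u * u = 0 := by
  have hs : Real.sqrt 105 ^ 2 = 105 := Real.sq_sqrt (by norm_num)
  set s : ℝ := Real.sqrt 105 with hsdef
  set a : ℝ := (1 / 4) * (s - 3) with ha
  set b : ℝ := (1 / 2) * (5 - s) with hb
  -- k as an indicator function
  have hkind : ∀ u, k u = Set.indicator (Set.Icc (-1:ℝ) 1) (fun x => a + b * |x|) u := by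
    intro u
    rw [hk u]
    by_cases h : |u| ≤ 1
    · rw [Set.indicator_of_mem (Set.mem_Icc.mpr (abs_le.mp h)), if_pos h]
    · rw [Set.indicator_of_notMem, if_neg h]
      intro hmem
      exact h (abs_le.mpr (Set.mem_Icc.mp hmem))
  -- K on [-1, 1]
  have hg : ∀ t, -1 ≤ t → t ≤ 1 → K t = ∫ x in (-1:ℝ)..t, (a + b * |x|) := by
    intro t h1 h2
    rw [hK]
    calc ∫ u in Set.Iic t, k u
        = ∫ u in Set.Iic t, Set.indicator (Set.Icc (-1:ℝ) 1) (fun x => a + b * |x|) u := by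
          simp only [hkind]
      _ = ∫ u in Set.Iic t ∩ Set.Icc (-1:ℝ) 1, (a + b * |u|) :=
          setIntegral_indicator measurableSet_Icc
      _ = ∫ u in Set.Icc (-1:ℝ) t, (a + b * |u|) := by
          have hset : Set.Iic t ∩ Set.Icc (-1:ℝ) 1 = Set.Icc (-1:ℝ) t := by
            ext x
            simp only [Set.mem_inter_iff, Set.mem_Iic, Set.mem_Icc]
            constructor
            · rintro ⟨hx, hy, _⟩; exact ⟨hy, hx⟩
            · rintro ⟨hy, hx⟩; exact ⟨hx, hy, hx.trans h2⟩
          rw [hset]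
      _ = ∫ u in Set.Ioc (-1:ℝ) t, (a + b * |u|) := integral_Icc_eq_integral_Ioc
      _ = ∫ x in (-1:ℝ)..t, (a + b * |x|) := (intervalIntegral.integral_of_le h1).symm
  -- explicit formula for K on [-1, 0]
  have hK1 : ∀ u, -1 ≤ u → u ≤ 0 → K u = a*(u+1) + b*(1-u^2)/2 := by
    intro u h1 h2
    rw [hg u h1 (h2.trans (by norm_num))]
    rw [intervalIntegral.integral_congr
      (g := fun x => a + (-b)*x + 0*x^2 + 0*x^3 + 0*x^4) ?_, poly_int]
    · ring
    · intro x hx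
      rw [Set.uIcc_of_le h1] at hx
      have hx0 : x ≤ 0 := hx.2.trans h2
      simp only
      rw [abs_of_nonpos hx0]
      ring
  -- explicit formula for K on [0, 1]
  have hK2 : ∀ u, 0 ≤ u → u ≤ 1 → K u = a*(u+1) + b*(1+u^2)/2 := by
    intro u h1 h2
    rw [hg u (by linarith) h2]
    rw [← intervalIntegral.integral_add_adjacent_intervals (b := (0:ℝ))
      (Continuous.intervalIntegrable (by fun_prop) _ _)
      (Continuous.intervalIntegrable (by fun_prop) _ _)]
    rw [intervalIntegral.integral_congr (a := (-1:ℝ)) (b := (0:ℝ))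
      (g := fun x => a + (-b)*x + 0*x^2 + 0*x^3 + 0*x^4) ?_, poly_int]
    rw [intervalIntegral.integral_congr (a := (0:ℝ)) (b := u)
      (g := fun x => a + b*x + 0*x^2 + 0*x^3 + 0*x^4) ?_, poly_int]
    · ring
    · intro x hx
      rw [Set.uIcc_of_le h1] at hx
      simp only
      rw [abs_of_nonneg hx.1]
      ring
    · intro x hx
      rw [Set.uIcc_of_le (by norm_num : (-1:ℝ) ≤ 0)] at hx
      simp only
      rw [abs_of_nonpos hx.2]
      ring
  -- reduce the full integral to an interval integral
  have hind : (fun u => K u * k u * u)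
      = Set.indicator (Set.Icc (-1:ℝ) 1) (fun u => K u * (a + b * |u|) * u) := by
    funext u
    rw [hkind u]
    by_cases h : u ∈ Set.Icc (-1:ℝ) 1
    · rw [Set.indicator_of_mem h, Set.indicator_of_mem h]
    · rw [Set.indicator_of_notMem h, Set.indicator_of_notMem h]
      ring
  rw [hind, integral_indicator measurableSet_Icc, integral_Icc_eq_integral_Ioc,
    ← intervalIntegral.integral_of_le (by norm_num : (-1:ℝ) ≤ 1)]
  -- pointwise identification with polynomials on each half
  have e1 : Set.EqOn (fun u => K u * (a + b * |u|) * u)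
      (fun u => 0 + (a^2 + a*b/2)*u + (a^2 - a*b - b^2/2)*u^2 + (-(3/2*(a*b)))*u^3
        + (b^2/2)*u^4) (Set.uIcc (-1:ℝ) 0) := by
    intro u hu
    rw [Set.uIcc_of_le (by norm_num : (-1:ℝ) ≤ 0)] at hu
    simp only
    rw [hK1 u hu.1 hu.2, abs_of_nonpos hu.2]
    ring
  have e2 : Set.EqOn (fun u => K u * (a + b * |u|) * u)
      (fun u => 0 + (a^2 + a*b/2)*u + (a^2 + a*b + b^2/2)*u^2 + (3/2*(a*b))*u^3
        + (b^2/2)*u^4) (Set.uIcc (0:ℝ) 1) := by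
    intro u hu
    rw [Set.uIcc_of_le (by norm_num : (0:ℝ) ≤ 1)] at hu
    simp only
    rw [hK2 u hu.1 hu.2, abs_of_nonneg hu.1]
    ring
  have i1 : IntervalIntegrable (fun u => K u * (a + b * |u|) * u) volume (-1) 0 := by
    rw [intervalIntegrable_iff]
    exact (intervalIntegrable_iff.mp
      (Continuous.intervalIntegrable (by fun_prop) (-1) 0)).congr_fun
      (fun x hx => (e1 (Set.uIoc_subset_uIcc hx)).symm) measurableSet_uIoc
  have i2 : IntervalIntegrable (fun u => K u * (a + b * |u|) * u) volume 0 1 := by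
    rw [intervalIntegrable_iff]
    exact (intervalIntegrable_iff.mp
      (Continuous.intervalIntegrable (by fun_prop) 0 1)).congr_fun
      (fun x hx => (e2 (Set.uIoc_subset_uIcc hx)).symm) measurableSet_uIoc
  rw [← intervalIntegral.integral_add_adjacent_intervals i1 i2,
    intervalIntegral.integral_congr e1, intervalIntegral.integral_congr e2,
    poly_int, poly_int]
  have hs' : s^2 = 105 := hs
  linear_combination (-(1/480 : ℝ)) * hs'
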